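/- arXiv:1806.02456 — 2 statements merged into one kernel-verified Lean document; each statement's English description precedes it below -/
import Mathlib

section
/- Let u be a minimizer of the energy E, let U ⊆ I be an open interval on which f has bounded variation (eVariationOn f U < ∞), and let x ∈ U. Suppose f has one-sided limits L⁻ = lim_{y→x⁻} f(y) and L⁺ = lim_{y→x⁺} f(y). Then u has one-sided limits M⁻ = lim_{y→x⁻} u(y) and M⁺ = lim_{y→x⁺} u(y) at x, and the jump of u at x is bounded by that of f: ‖M⁺ − M⁻‖ ≤ ‖L⁺ − L⁻‖. -/
open MeasureTheory Set Filter
open scoped ENNReal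

noncomputable section

/-- Square-integrability of `w` on the set `S`. -/
def SqIntOn {n : ℕ} (w : ℝ → EuclideanSpace ℝ (Fin n)) (S : Set ℝ) : Prop :=
  MeasureTheory.IntegrableOn (fun x => ‖w x‖ ^ 2) S

/-- The Rudin–Osher–Fatemi energy with fidelity weight `1/(2 lam)`, datum `f`,
on the interval `I = Ioo a b`. -/
def rofEnergy {n : ℕ} (lam a b : ℝ) (f w : ℝ → EuclideanSpace ℝ (Fin n)) : ℝ≥0∞ :=
  eVariationOn w (Set.Ioo a b) +
    ENNReal.ofReal ((1 / (2 * lam)) * ∫ x in Set.Ioo a b, ‖w x - f x‖ ^ 2)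

/-- `u` is a minimizer of the ROF energy among Borel measurable functions
square-integrable on `Ioo a b`. -/
def IsMinimizer {n : ℕ} (lam a b : ℝ) (f u : ℝ → EuclideanSpace ℝ (Fin n)) : Prop :=
  Measurable u ∧ SqIntOn u (Set.Ioo a b) ∧
    ∀ w : ℝ → EuclideanSpace ℝ (Fin n), Measurable w → SqIntOn w (Set.Ioo a b) →
      rofEnergy lam a b f u ≤ rofEnergy lam a b f w

/-!
A minimizer has finite energy, hence bounded variation, so `u` has one-sided limits `M⁻`, `M⁺`
at `x`. Suppose `⟪M⁺ - L⁺, M⁺ - M⁻⟫ > 0`. Lower `u` by `c = s • (M⁺ - M⁻)`, `0 < s ≤ 1` small, on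
a short interval `(x, m)` and give it the value `M⁺ - c` at `x`: the jump at `x` shrinks by `‖c‖`,
the jump at `m` grows by at most `‖c‖`, and near `x⁺` the function gets strictly closer to `f`,
which contradicts minimality. Reflecting `x ↦ -x` gives `⟪M⁻ - L⁻, M⁻ - M⁺⟫ ≤ 0`, and adding
the two inequalities yields `‖M⁺ - M⁻‖² ≤ ⟪L⁺ - L⁻, M⁺ - M⁻⟫ ≤ ‖L⁺ - L⁻‖ ‖M⁺ - M⁻‖`.
-/

open Topology
open scoped RealInnerProductSpace

section InnerProduct

variable {F : Type*} [NormedAddCommGroup F] [InnerProductSpace ℝ F]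

theorem exists_norm_sub_smul_lt {q p : F} (h : 0 < ⟪q, p⟫) :
    ∃ s ∈ Ioc (0 : ℝ) 1, ‖q - s • p‖ < ‖q‖ := by
  have hp : 0 < ‖p‖ ^ 2 := by
    have : p ≠ 0 := by rintro rfl; simp at h
    positivity
  set s := min 1 (⟪q, p⟫ / ‖p‖ ^ 2)
  have hs0 : 0 < s := lt_min one_pos (div_pos h hp)
  have hsp : s * ‖p‖ ^ 2 ≤ ⟪q, p⟫ := (le_div_iff₀ hp).1 (min_le_right _ _)
  refine ⟨s, ⟨hs0, min_le_left _ _⟩, ?_⟩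
  rw [← sq_lt_sq₀ (norm_nonneg _) (norm_nonneg _), norm_sub_sq_real, real_inner_smul_right,
    norm_smul, Real.norm_of_nonneg hs0.le]
  nlinarith

theorem norm_sub_le_of_inner_nonpos {l l' r r' : F} (hr : ⟪r - r', r - l⟫ ≤ 0)
    (hl : ⟪l - l', l - r⟫ ≤ 0) : ‖r - l‖ ≤ ‖r' - l'‖ := by
  have hsplit : ‖r - l‖ ^ 2 = ⟪r - r', r - l⟫ + ⟪l - l', l - r⟫ + ⟪r' - l', r - l⟫ := by
    rw [← real_inner_self_eq_norm_sq, ← neg_sub r l, inner_neg_right, ← sub_eq_add_neg,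
      ← inner_sub_left, ← inner_add_left]
    congr 1
    abel
  have hcs : ‖r - l‖ ^ 2 ≤ ‖r' - l'‖ * ‖r - l‖ := by
    linarith [real_inner_le_norm (r' - l') (r - l)]
  rcases (norm_nonneg (r - l)).eq_or_lt with h0 | hpos
  · rw [← h0]
    exact norm_nonneg _
  · nlinarith

theorem edist_sub_smul_sub_add_enorm_smul (r l : F) {s : ℝ} (hs0 : 0 ≤ s) (hs1 : s ≤ 1) :
    edist (r - s • (r - l)) l + ‖s • (r - l)‖ₑ = edist r l := by
  rw [edist_dist, edist_dist, ← ofReal_norm,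
    ← ENNReal.ofReal_add dist_nonneg (norm_nonneg _), dist_eq_norm, dist_eq_norm,
    show r - s • (r - l) - l = (1 - s) • (r - l) by module, norm_smul, norm_smul,
    Real.norm_of_nonneg hs0, Real.norm_of_nonneg (sub_nonneg.2 hs1)]
  ring_nf

end InnerProduct

theorem integral_lt_integral_of_ae_le_of_lt_on {X : Type*} [MeasurableSpace X] {μ : Measure X}
    {f g : X → ℝ} (hf : Integrable f μ) (hg : Integrable g μ) (hle : f ≤ᵐ[μ] g) {t : Set X}
    (ht : μ t ≠ 0) (hlt : ∀ x ∈ t, f x < g x) : ∫ x, f x ∂μ < ∫ x, g x ∂μ := by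
  rw [← sub_pos, ← integral_sub hg hf,
    integral_pos_iff_support_of_nonneg_ae (hle.mono fun x => sub_nonneg.2) (hg.sub hf)]
  exact pos_iff_ne_zero.2 (mt (measure_mono_null fun x hx => (sub_pos.2 (hlt x hx)).ne') ht)

section Variation

variable {α E : Type*} [LinearOrder α]

theorem eVariationOn_sub_const [SeminormedAddCommGroup E] (v : α → E) (s : Set α) (c : E) :
    eVariationOn (fun y => v y - c) s = eVariationOn v s := by
  simp only [eVariationOn, edist_sub_right]

variable [TopologicalSpace α] [OrderTopology α]

theorem BoundedVariationOn.exists_tendsto_nhdsLT [PseudoEMetricSpace E] [CompleteSpace E]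
    {v : α → E} {s : Set α} (hv : BoundedVariationOn v s) {x : α} (hs : s ∈ 𝓝 x) :
    ∃ l, Tendsto v (𝓝[<] x) (𝓝 l) := by
  obtain ⟨l, hl⟩ := hv.exists_tendsto_left x
  rw [nhdsWithin_inter_of_mem (mem_nhdsWithin_of_mem_nhds hs)] at hl
  exact ⟨l, hl⟩

theorem BoundedVariationOn.exists_tendsto_nhdsGT [PseudoEMetricSpace E] [CompleteSpace E]
    {v : α → E} {s : Set α} (hv : BoundedVariationOn v s) {x : α} (hs : s ∈ 𝓝 x) :
    ∃ r, Tendsto v (𝓝[>] x) (𝓝 r) := by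
  obtain ⟨r, hr⟩ := hv.exists_tendsto_right x
  rw [nhdsWithin_inter_of_mem (mem_nhdsWithin_of_mem_nhds hs)] at hr
  exact ⟨r, hr⟩

theorem eVariationOn_Ioo_eq_add_edist_add [DenselyOrdered α] [PseudoEMetricSpace E] {v : α → E}
    {a b x : α} (hx : x ∈ Ioo a b) {l r : E} (hl : Tendsto v (𝓝[<] x) (𝓝 l))
    (hr : Tendsto v (𝓝[>] x) (𝓝 r)) :
    eVariationOn v (Ioo a b) =
      eVariationOn v (Ioo a x) + (edist (v x) l + edist (v x) r) + eVariationOn v (Ioo x b) := by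
  have hleft : eVariationOn v (Ioc a x) = eVariationOn v (Ioo a x) + edist (v x) l := by
    have hIoo : Ioc a x ∩ Iio x = Ioo a x := by ext; grind
    have h := eVariationOn.eVariationOn_on_inter_Iic_eq_Iio_add_edist (f := v) (l := l)
      (s := Ioc a x) (by rw [hIoo]; exact right_nhdsWithin_Ioo_neBot hx.1) (right_mem_Ioc.2 hx.1)
      (by rw [hIoo]; exact hl.mono_left (nhdsWithin_mono _ Ioo_subset_Iio_self))
    rwa [hIoo, inter_eq_left.2 Ioc_subset_Iic_self] at h
  have hright : eVariationOn v (Ico x b) = eVariationOn v (Ioo x b) + edist (v x) r := by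
    have hIoo : Ico x b ∩ Ioi x = Ioo x b := by ext; grind
    have h := eVariationOn.eVariationOn_on_inter_Ici_eq_Ioi_add_edist (f := v) (l := r)
      (s := Ico x b) (by rw [hIoo]; exact left_nhdsWithin_Ioo_neBot hx.2) (left_mem_Ico.2 hx.2)
      (by rw [hIoo]; exact hr.mono_left (nhdsWithin_mono _ Ioo_subset_Ioi_self))
    rwa [hIoo, inter_eq_left.2 Ico_subset_Ici_self] at h
  rw [← Ioc_union_Ico_eq_Ioo hx.1 hx.2, eVariationOn.union v (isGreatest_Ioc hx.1)
    (isLeast_Ico hx.2), hleft, hright]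
  ring

end Variation

section Competitor

variable {α E : Type*} [LinearOrder α] [SeminormedAddCommGroup E]

-- Used with `r` the right limit of `u` at `x`: the value `r - c` at `x` then leaves no jump on the
-- right of `x`.
def shiftAfter (u : α → E) (x m : α) (r c : E) : α → E :=
  open Classical in fun y => if y = x then r - c else if y ∈ Ioo x m then u y - c else u y

variable {u : α → E} {x m y : α} {r c : E}

theorem shiftAfter_self : shiftAfter u x m r c x = r - c := if_pos rfl

theorem shiftAfter_of_mem_Ioo (hy : y ∈ Ioo x m) : shiftAfter u x m r c y = u y - c := by
  simp [shiftAfter, hy.1.ne', hy]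

theorem shiftAfter_of_notMem (hyx : y ≠ x) (hy : y ∉ Ioo x m) : shiftAfter u x m r c y = u y := by
  simp [shiftAfter, hyx, hy]

theorem eqOn_shiftAfter_Iio : EqOn (shiftAfter u x m r c) u (Iio x) :=
  fun _ hy => shiftAfter_of_notMem (ne_of_lt hy) fun h => (lt_asymm h.1 hy)

theorem eqOn_shiftAfter_Ici (hxm : x < m) : EqOn (shiftAfter u x m r c) u (Ici m) :=
  fun _ hy => shiftAfter_of_notMem (hxm.trans_le hy).ne' fun h => (not_lt.2 hy) h.2

theorem norm_shiftAfter_sub_le {f : α → E} (hc : ∀ y ∈ Ioo x m, ‖u y - c - f y‖ ≤ ‖u y - f y‖)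
    (hyx : y ≠ x) : ‖shiftAfter u x m r c y - f y‖ ≤ ‖u y - f y‖ := by
  by_cases hy : y ∈ Ioo x m
  · rw [shiftAfter_of_mem_Ioo hy]
    exact hc y hy
  · rw [shiftAfter_of_notMem hyx hy]

theorem Measurable.shiftAfter [MeasurableSpace α] [TopologicalSpace α] [OrderClosedTopology α]
    [OpensMeasurableSpace α] [MeasurableSingletonClass α] [MeasurableSpace E] [BorelSpace E]
    (hu : Measurable u) : Measurable (shiftAfter u x m r c) :=
  Measurable.ite (measurableSet_singleton x) measurable_const
    (Measurable.ite measurableSet_Ioo (hu.sub_const c) hu)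

theorem eVariationOn_shiftAfter_le [TopologicalSpace α] [OrderTopology α] [DenselyOrdered α]
    {a b : α} {l l' r' : E} (hax : a < x) (hxm : x < m) (hmb : m < b)
    (hl : Tendsto u (𝓝[<] x) (𝓝 l)) (hr : Tendsto u (𝓝[>] x) (𝓝 r))
    (hl' : Tendsto u (𝓝[<] m) (𝓝 l')) (hr' : Tendsto u (𝓝[>] m) (𝓝 r'))
    (hc : edist (r - c) l + ‖c‖ₑ ≤ edist r l) :
    eVariationOn (shiftAfter u x m r c) (Ioo a b) ≤ eVariationOn u (Ioo a b) := by
  set w := shiftAfter u x m r c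
  have hwx : w x = r - c := shiftAfter_self
  have hwm : w m = u m := eqOn_shiftAfter_Ici hxm (le_refl m)
  have hw_Ioo : EqOn w (fun y => u y - c) (Ioo x m) := fun _ hy => shiftAfter_of_mem_Ioo hy
  have hwl : Tendsto w (𝓝[<] x) (𝓝 l) := hl.congr' eqOn_shiftAfter_Iio.eventuallyEq_nhdsWithin.symm
  have hwr : Tendsto w (𝓝[>] x) (𝓝 (r - c)) :=
    (hr.sub_const c).congr' (eventuallyEq_of_mem (Ioo_mem_nhdsGT hxm) hw_Ioo).symm
  have hwl' : Tendsto w (𝓝[<] m) (𝓝 (l' - c)) :=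
    (hl'.sub_const c).congr' (eventuallyEq_of_mem (Ioo_mem_nhdsLT hxm) hw_Ioo).symm
  have hwr' : Tendsto w (𝓝[>] m) (𝓝 r') :=
    hr'.congr' ((eqOn_shiftAfter_Ici hxm).mono Ioi_subset_Ici_self).eventuallyEq_nhdsWithin.symm
  have hx : x ∈ Ioo a b := ⟨hax, hxm.trans hmb⟩
  have hm : m ∈ Ioo x b := ⟨hxm, hmb⟩
  rw [eVariationOn_Ioo_eq_add_edist_add hx hwl hwr, eVariationOn_Ioo_eq_add_edist_add hm hwl' hwr',
    eVariationOn_Ioo_eq_add_edist_add hx hl hr, eVariationOn_Ioo_eq_add_edist_add hm hl' hr',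
    eVariationOn.eq_of_eqOn (eqOn_shiftAfter_Iio.mono Ioo_subset_Iio_self),
    eVariationOn.eq_of_eqOn hw_Ioo, eVariationOn_sub_const,
    eVariationOn.eq_of_eqOn
      ((eqOn_shiftAfter_Ici hxm).mono (Ioo_subset_Ioi_self.trans Ioi_subset_Ici_self)),
    hwx, hwm, edist_self, add_zero]
  have hjm : edist (u m) (l' - c) ≤ edist (u m) l' + ‖c‖ₑ :=
    calc edist (u m) (l' - c) ≤ edist (u m) l' + edist l' (l' - c) := edist_triangle _ _ _
      _ = edist (u m) l' + ‖c‖ₑ := by rw [edist_eq_enorm_sub l', sub_sub_cancel]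
  have hjx : edist r l ≤ edist (u x) l + edist (u x) r := by
    rw [edist_comm (u x) r, add_comm]
    exact edist_triangle _ _ _
  calc _ ≤ eVariationOn u (Ioo a x) + edist (r - c) l + (eVariationOn u (Ioo x m) +
          (edist (u m) l' + ‖c‖ₑ + edist (u m) r') + eVariationOn u (Ioo m b)) := by gcongr
    _ = eVariationOn u (Ioo a x) + (edist (r - c) l + ‖c‖ₑ) + (eVariationOn u (Ioo x m) +
          (edist (u m) l' + edist (u m) r') + eVariationOn u (Ioo m b)) := by ring
    _ ≤ _ := by gcongr _ + ?_ + _; exact hc.trans hjx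

end Competitor

section ROF

variable {n : ℕ}

theorem sqIntOn_iff_memLp {v : ℝ → EuclideanSpace ℝ (Fin n)} {s : Set ℝ}
    (hv : AEStronglyMeasurable v (volume.restrict s)) :
    SqIntOn v s ↔ MemLp v 2 (volume.restrict s) :=
  (memLp_two_iff_integrable_sq_norm hv).symm

theorem SqIntOn.sub {v w : ℝ → EuclideanSpace ℝ (Fin n)} {s : Set ℝ} (hv : Measurable v)
    (hw : Measurable w) (hvs : SqIntOn v s) (hws : SqIntOn w s) :
    SqIntOn (fun y => v y - w y) s :=
  (sqIntOn_iff_memLp (hv.sub hw).aestronglyMeasurable).2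
    (((sqIntOn_iff_memLp hv.aestronglyMeasurable).1 hvs).sub
      ((sqIntOn_iff_memLp hw.aestronglyMeasurable).1 hws))

theorem SqIntOn.of_norm_sub_le {u w f : ℝ → EuclideanSpace ℝ (Fin n)} {s : Set ℝ}
    (hu : Measurable u) (hw : Measurable w) (hf : Measurable f) (hus : SqIntOn u s)
    (hfs : SqIntOn f s) (hle : ∀ᵐ y ∂volume.restrict s, ‖w y - f y‖ ≤ ‖u y - f y‖) :
    SqIntOn w s := by
  have hwf : MemLp (fun y => w y - f y) 2 (volume.restrict s) :=
    ((sqIntOn_iff_memLp (hu.sub hf).aestronglyMeasurable).1 (hus.sub hu hf hfs)).of_le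
      (hw.sub hf).aestronglyMeasurable hle
  rw [sqIntOn_iff_memLp hw.aestronglyMeasurable]
  simpa [Pi.add_def] using hwf.add ((sqIntOn_iff_memLp hf.aestronglyMeasurable).1 hfs)

theorem eVariationOn_Ioo_comp_neg {E : Type*} [PseudoEMetricSpace E] (v : ℝ → E) (a b : ℝ) :
    eVariationOn (fun y => v (-y)) (Ioo (-b) (-a)) = eVariationOn v (Ioo a b) := by
  rw [← Function.comp_def, eVariationOn.comp_eq_of_antitoneOn v Neg.neg
    (fun _ _ _ _ h => neg_le_neg h), image_neg_Ioo, neg_neg, neg_neg]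

theorem setIntegral_Ioo_comp_neg {F : Type*} [NormedAddCommGroup F] [NormedSpace ℝ F]
    (g : ℝ → F) (a b : ℝ) : ∫ y in Ioo (-b) (-a), g (-y) = ∫ y in Ioo a b, g y := by
  rw [← neg_Ioo]
  exact (Measure.measurePreserving_neg volume).setIntegral_preimage_emb
    (MeasurableEquiv.neg ℝ).measurableEmbedding g (Ioo a b)

theorem SqIntOn.comp_neg {v : ℝ → EuclideanSpace ℝ (Fin n)} {a b : ℝ}
    (h : SqIntOn v (Ioo a b)) : SqIntOn (fun y => v (-y)) (Ioo (-b) (-a)) := by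
  rw [← neg_Ioo]
  exact IntegrableOn.comp_neg h

theorem rofEnergy_comp_neg (lam a b : ℝ) (f w : ℝ → EuclideanSpace ℝ (Fin n)) :
    rofEnergy lam (-b) (-a) (fun y => f (-y)) (fun y => w (-y)) = rofEnergy lam a b f w := by
  rw [rofEnergy, rofEnergy, eVariationOn_Ioo_comp_neg,
    setIntegral_Ioo_comp_neg (fun y => ‖w y - f y‖ ^ 2)]

theorem rofEnergy_lt_of_le_of_lt {lam a b : ℝ} {f u w : ℝ → EuclideanSpace ℝ (Fin n)}
    (hlam : 0 < lam) (hV : eVariationOn w (Ioo a b) ≤ eVariationOn u (Ioo a b))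
    (hu : eVariationOn u (Ioo a b) ≠ ∞)
    (hF : ∫ y in Ioo a b, ‖w y - f y‖ ^ 2 < ∫ y in Ioo a b, ‖u y - f y‖ ^ 2) :
    rofEnergy lam a b f w < rofEnergy lam a b f u := by
  have hw : 0 ≤ ∫ y in Ioo a b, ‖w y - f y‖ ^ 2 :=
    setIntegral_nonneg measurableSet_Ioo fun _ _ => by positivity
  refine ENNReal.add_lt_add_of_le_of_lt (ne_top_of_le_ne_top hu hV) hV ?_
  have hlam' : 0 < 1 / (2 * lam) := by positivity
  exact (ENNReal.ofReal_lt_ofReal_iff (mul_pos hlam' (hw.trans_lt hF))).2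
    (mul_lt_mul_of_pos_left hF hlam')

namespace IsMinimizer

variable {lam a b : ℝ} {f u : ℝ → EuclideanSpace ℝ (Fin n)}

theorem comp_neg (hu : IsMinimizer lam a b f u) :
    IsMinimizer lam (-b) (-a) (fun y => f (-y)) (fun y => u (-y)) := by
  refine ⟨hu.1.comp measurable_neg, hu.2.1.comp_neg, fun w hw hws => ?_⟩
  have hmin := hu.2.2 (fun y => w (-y)) (hw.comp measurable_neg) (by simpa using hws.comp_neg)
  calc _ = rofEnergy lam a b f u := rofEnergy_comp_neg lam a b f u
    _ ≤ rofEnergy lam a b f (fun y => w (-y)) := hmin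
    _ = _ := by simpa using (rofEnergy_comp_neg lam a b f fun y => w (-y)).symm

theorem boundedVariationOn (hu : IsMinimizer lam a b f u) : BoundedVariationOn u (Ioo a b) := by
  have hzero := hu.2.2 0 measurable_const (by simp [SqIntOn])
  have hvar : eVariationOn (0 : ℝ → EuclideanSpace ℝ (Fin n)) (Ioo a b) = 0 :=
    eVariationOn.constant_on fun _ ⟨_, _, h1⟩ _ ⟨_, _, h2⟩ => h1.symm.trans h2
  have hfin : rofEnergy lam a b f u ≠ ∞ :=
    ne_top_of_le_ne_top (by simp [rofEnergy, hvar]) hzero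
  exact fun h => hfin (by simp [rofEnergy, h])

theorem inner_sub_sub_nonpos {x : ℝ} {l r fr : EuclideanSpace ℝ (Fin n)}
    (hu : IsMinimizer lam a b f u) (hlam : 0 < lam) (hf : Measurable f)
    (hfs : SqIntOn f (Ioo a b)) (hx : x ∈ Ioo a b) (hl : Tendsto u (𝓝[<] x) (𝓝 l))
    (hr : Tendsto u (𝓝[>] x) (𝓝 r)) (hfr : Tendsto f (𝓝[>] x) (𝓝 fr)) :
    ⟪r - fr, r - l⟫ ≤ 0 := by
  by_contra! hpos
  obtain ⟨s, ⟨hs0, hs1⟩, hs⟩ := exists_norm_sub_smul_lt hpos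
  set c := s • (r - l)
  have hcloser : ∀ᶠ y in 𝓝[>] x, ‖u y - c - f y‖ < ‖u y - f y‖ :=
    ((hr.sub_const c).sub hfr).norm.eventually_lt (hr.sub hfr).norm (by rwa [sub_right_comm])
  obtain ⟨m, ⟨hxm, hmb⟩, hm⟩ : ∃ m ∈ Ioo x b, ∀ y ∈ Ioo x m, ‖u y - c - f y‖ < ‖u y - f y‖ := by
    obtain ⟨m', hxm', hm'⟩ :=
      mem_nhdsGT_iff_exists_Ioo_subset.1 (hcloser.and (Ioo_mem_nhdsGT hx.2))
    obtain ⟨m, hxm, hmm'⟩ := exists_between (mem_Ioi.1 hxm')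
    exact ⟨m, ⟨hxm, (hm' ⟨hxm, hmm'⟩).2.2⟩, fun y hy => (hm' ⟨hy.1, hy.2.trans hmm'⟩).1⟩
  have hBV := hu.boundedVariationOn
  obtain ⟨l', hl'⟩ := hBV.exists_tendsto_nhdsLT (Ioo_mem_nhds (hx.1.trans hxm) hmb)
  obtain ⟨r', hr'⟩ := hBV.exists_tendsto_nhdsGT (Ioo_mem_nhds (hx.1.trans hxm) hmb)
  set w := shiftAfter u x m r c
  have hV : eVariationOn w (Ioo a b) ≤ eVariationOn u (Ioo a b) :=
    eVariationOn_shiftAfter_le hx.1 hxm hmb hl hr hl' hr'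
      (edist_sub_smul_sub_add_enorm_smul r l hs0.le hs1).le
  have hle : ∀ᵐ y ∂volume.restrict (Ioo a b), ‖w y - f y‖ ≤ ‖u y - f y‖ := by
    filter_upwards [ae_restrict_of_ae (compl_mem_ae_iff.2 (measure_singleton x))] with y hy
    exact norm_shiftAfter_sub_le (fun z hz => (hm z hz).le) hy
  have hw : Measurable w := hu.1.shiftAfter
  have hws : SqIntOn w (Ioo a b) := .of_norm_sub_le hu.1 hw hf hu.2.1 hfs hle
  have hF : ∫ y in Ioo a b, ‖w y - f y‖ ^ 2 < ∫ y in Ioo a b, ‖u y - f y‖ ^ 2 := by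
    refine integral_lt_integral_of_ae_le_of_lt_on (hws.sub hw hf hfs) (hu.2.1.sub hu.1 hf hfs)
      (hle.mono fun y h => pow_le_pow_left₀ (norm_nonneg _) h 2) (t := Ioo x m) ?_ fun y hy => ?_
    · rw [Measure.restrict_apply measurableSet_Ioo,
        inter_eq_left.2 (Ioo_subset_Ioo hx.1.le hmb.le), Real.volume_Ioo]
      simpa using hxm
    · rw [show w y = u y - c from shiftAfter_of_mem_Ioo hy]
      exact pow_lt_pow_left₀ (hm y hy) (norm_nonneg _) two_ne_zero
  exact (hu.2.2 w hw hws).not_gt (rofEnergy_lt_of_le_of_lt hlam hV hBV hF)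

end IsMinimizer

end ROF

theorem jump_of_minimizer_le_jump_of_datum_general
    {n : ℕ} (a b : ℝ) (lam : ℝ) (hlam : 0 < lam)
    (f : ℝ → EuclideanSpace ℝ (Fin n)) (hf_meas : Measurable f)
    (hf_sq : SqIntOn f (Set.Ioo a b))
    (u : ℝ → EuclideanSpace ℝ (Fin n)) (hu : IsMinimizer lam a b f u)
    (c d : ℝ) (hU : Set.Ioo c d ⊆ Set.Ioo a b)
    (x : ℝ) (hx : x ∈ Set.Ioo c d)
    (Lminus Lplus : EuclideanSpace ℝ (Fin n))
    (hLminus : Filter.Tendsto f (nhdsWithin x (Set.Iio x)) (nhds Lminus))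
    (hLplus : Filter.Tendsto f (nhdsWithin x (Set.Ioi x)) (nhds Lplus)) :
    ∃ Mminus Mplus : EuclideanSpace ℝ (Fin n),
      Filter.Tendsto u (nhdsWithin x (Set.Iio x)) (nhds Mminus) ∧
      Filter.Tendsto u (nhdsWithin x (Set.Ioi x)) (nhds Mplus) ∧
      ‖Mplus - Mminus‖ ≤ ‖Lplus - Lminus‖ := by
  have hxab := hU hx
  have hBV := hu.boundedVariationOn
  obtain ⟨Mminus, hMminus⟩ := hBV.exists_tendsto_nhdsLT (Ioo_mem_nhds hxab.1 hxab.2)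
  obtain ⟨Mplus, hMplus⟩ := hBV.exists_tendsto_nhdsGT (Ioo_mem_nhds hxab.1 hxab.2)
  refine ⟨Mminus, Mplus, hMminus, hMplus, norm_sub_le_of_inner_nonpos ?_ ?_⟩
  · exact hu.inner_sub_sub_nonpos hlam hf_meas hf_sq hxab hMminus hMplus hLplus
  · exact hu.comp_neg.inner_sub_sub_nonpos hlam (hf_meas.comp measurable_neg) hf_sq.comp_neg
      ⟨neg_lt_neg hxab.2, neg_lt_neg hxab.1⟩ (hMplus.comp tendsto_neg_nhdsLT_neg)
      (hMminus.comp tendsto_neg_nhdsGT_neg) (hLminus.comp tendsto_neg_nhdsGT_neg)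

/-- jumps of the ROF minimizer are bounded by jumps of the datum:
if `f` has one-sided limits at `x ∈ U`, so does `u`, and the jump of `u` at `x`
is bounded by that of `f`. -/
theorem jump_of_minimizer_le_jump_of_datum
    {n : ℕ} (hn : 1 ≤ n) (a b : ℝ) (hab : a < b) (lam : ℝ) (hlam : 0 < lam)
    (f : ℝ → EuclideanSpace ℝ (Fin n)) (hf_meas : Measurable f)
    (hf_sq : SqIntOn f (Set.Ioo a b))
    (u : ℝ → EuclideanSpace ℝ (Fin n)) (hu : IsMinimizer lam a b f u)
    (c d : ℝ) (hU : Set.Ioo c d ⊆ Set.Ioo a b)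
    (hfBV : eVariationOn f (Set.Ioo c d) < ⊤)
    (x : ℝ) (hx : x ∈ Set.Ioo c d)
    (Lminus Lplus : EuclideanSpace ℝ (Fin n))
    (hLminus : Filter.Tendsto f (nhdsWithin x (Set.Iio x)) (nhds Lminus))
    (hLplus : Filter.Tendsto f (nhdsWithin x (Set.Ioi x)) (nhds Lplus)) :
    ∃ Mminus Mplus : EuclideanSpace ℝ (Fin n),
      Filter.Tendsto u (nhdsWithin x (Set.Iio x)) (nhds Mminus) ∧
      Filter.Tendsto u (nhdsWithin x (Set.Ioi x)) (nhds Mplus) ∧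
      ‖Mplus - Mminus‖ ≤ ‖Lplus - Lminus‖ :=
  jump_of_minimizer_le_jump_of_datum_general a b lam hlam f hf_meas hf_sq u hu c d hU x hx Lminus
    Lplus hLminus hLplus
end
end

section
/- Let (f_k) be a sequence of Borel measurable functions ℝ → ℝⁿ, square-integrable on I, converging to f in L²(I,ℝⁿ), i.e. ∫_I ‖f_k − f‖² → 0. For each k let u_k be a minimizer of the energy E_{f_k} (the Rudin–Osher–Fatemi energy with datum f_k), and let u be a minimizer of E_f. Then u_k converges to u in L²(I,ℝⁿ): ∫_I ‖u_k − u‖² → 0 as k → ∞. -/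
/-!
Let `u`, `v` minimize the energies with data `f`, `g`, and let `m` be their pointwise midpoint.
Since `2 TV(m) ≤ TV(u) + TV(v)` and both variations are finite, adding the two minimality
inequalities against the competitor `m` cancels the variations and leaves
`‖u - f‖² + ‖v - g‖² ≤ ‖m - f‖² + ‖m - g‖²` in `L²(I)`. The parallelogram law gives
`‖m - f‖² + ‖m - g‖² + ‖u - v‖² / 4 ≤ ‖u - f‖² + ‖v - g‖² + ‖f - g‖²` pointwise, hence
`‖u - v‖² ≤ 4 ‖f - g‖²`: the solution map is Lipschitz from `L²(I)` to itself.
-/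

open MeasureTheory Set Filter
open scoped ENNReal

noncomputable section

theorem norm_midpoint_sub_sq_add_le {E : Type*} [NormedAddCommGroup E] [InnerProductSpace ℝ E]
    (U V F G : E) :
    ‖midpoint ℝ U V - F‖ ^ 2 + ‖midpoint ℝ U V - G‖ ^ 2 + ‖U - V‖ ^ 2 / 4 ≤
      ‖U - F‖ ^ 2 + ‖V - G‖ ^ 2 + ‖F - G‖ ^ 2 := by
  set P := U - F
  set Q := V - G
  set Y := F - G
  have half_norm : ∀ W : E, ‖(2 : ℝ)⁻¹ • W‖ ^ 2 = ‖W‖ ^ 2 / 4 := fun W => by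
    rw [norm_smul]; norm_num; ring
  have hF : midpoint ℝ U V - F = (2 : ℝ)⁻¹ • (P + Q - Y) := by
    rw [midpoint_eq_smul_add]; simp only [P, Q, Y, invOf_eq_inv]; module
  have hG : midpoint ℝ U V - G = (2 : ℝ)⁻¹ • (P + Q + Y) := by
    rw [midpoint_eq_smul_add]; simp only [P, Q, Y, invOf_eq_inv]; module
  have hUV : U - V = P - Q + Y := by simp only [P, Q, Y]; abel
  rw [hF, hG, hUV, half_norm, half_norm]
  have := parallelogram_law_with_norm ℝ (P + Q) Y
  have := parallelogram_law_with_norm ℝ (P - Q) Y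
  have := parallelogram_law_with_norm ℝ P Q
  nlinarith [sq_nonneg ‖P - Q - Y‖]

theorem eVariationOn_midpoint_le {α V : Type*} [LinearOrder α] [NormedAddCommGroup V]
    [NormedSpace ℝ V] (f g : α → V) (s : Set α) :
    eVariationOn (fun x => midpoint ℝ (f x) (g x)) s ≤
      (eVariationOn f s + eVariationOn g s) / 2 := by
  refine iSup_le fun ⟨N, q, hq, hqs⟩ => ?_
  have hstep : ∀ x y, edist (midpoint ℝ (f x) (g x)) (midpoint ℝ (f y) (g y)) ≤
      (edist (f x) (f y) + edist (g x) (g y)) / 2 := fun x y => by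
    simp only [edist_nndist]
    exact_mod_cast nndist_midpoint_midpoint_le _ _ _ _
  calc ∑ i ∈ Finset.range N, edist (midpoint ℝ (f (q (i + 1))) (g (q (i + 1))))
        (midpoint ℝ (f (q i)) (g (q i)))
      ≤ (∑ i ∈ Finset.range N, edist (f (q (i + 1))) (f (q i)) +
          ∑ i ∈ Finset.range N, edist (g (q (i + 1))) (g (q i))) / 2 := by
        rw [← Finset.sum_add_distrib, div_eq_mul_inv, Finset.sum_mul]
        exact Finset.sum_le_sum fun i _ => (hstep _ _).trans_eq (div_eq_mul_inv _ _)
    _ ≤ (eVariationOn f s + eVariationOn g s) / 2 := by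
        gcongr <;> exact eVariationOn.sum_le hq hqs

theorem MeasureTheory.MemLp.integrable_norm_sub_sq {α E : Type*} [MeasurableSpace α] {μ : Measure α}
    [NormedAddCommGroup E] {f g : α → E} (hf : MemLp f 2 μ) (hg : MemLp g 2 μ) :
    Integrable (fun x => ‖f x - g x‖ ^ 2) μ :=
  (hf.sub hg).integrable_norm_pow two_ne_zero

section ROF

variable {n : ℕ} {lam a b : ℝ} {f g u v : ℝ → EuclideanSpace ℝ (Fin n)}

theorem SqIntOn.memLp (hu : Measurable u) (hus : SqIntOn u (Ioo a b)) :
    MemLp u 2 (volume.restrict (Ioo a b)) :=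
  (memLp_two_iff_integrable_sq_norm hu.aestronglyMeasurable).2 hus

theorem IsMinimizer.memLp (hu : IsMinimizer lam a b f u) :
    MemLp u 2 (volume.restrict (Ioo a b)) :=
  hu.2.1.memLp hu.1

theorem IsMinimizer.eVariationOn_ne_top (hu : IsMinimizer lam a b f u) :
    eVariationOn u (Ioo a b) ≠ ∞ := by
  have hzero := hu.2.2 0 measurable_const (by simp [SqIntOn])
  have hvar : eVariationOn (0 : ℝ → EuclideanSpace ℝ (Fin n)) (Ioo a b) = 0 :=
    eVariationOn.constant_on (subsingleton_singleton.anti (image_subset_iff.2 fun _ _ => rfl))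
  rw [rofEnergy, rofEnergy, hvar, zero_add] at hzero
  exact ne_top_of_le_ne_top ENNReal.ofReal_ne_top (le_self_add.trans hzero)

theorem IsMinimizer.integral_add_le_of_eVariationOn (hlam : 0 < lam)
    (hu : IsMinimizer lam a b f u) (hv : IsMinimizer lam a b g v)
    {w : ℝ → EuclideanSpace ℝ (Fin n)} (hw : Measurable w) (hws : SqIntOn w (Ioo a b))
    (hvar : eVariationOn w (Ioo a b) + eVariationOn w (Ioo a b) ≤
      eVariationOn u (Ioo a b) + eVariationOn v (Ioo a b)) :
    (∫ x in Ioo a b, ‖u x - f x‖ ^ 2) + ∫ x in Ioo a b, ‖v x - g x‖ ^ 2 ≤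
      (∫ x in Ioo a b, ‖w x - f x‖ ^ 2) + ∫ x in Ioo a b, ‖w x - g x‖ ^ 2 := by
  set c := 1 / (2 * lam)
  have hc : 0 < c := by positivity
  have hnn : ∀ h : ℝ → EuclideanSpace ℝ (Fin n), 0 ≤ c * ∫ x in Ioo a b, ‖h x‖ ^ 2 :=
    fun h => mul_nonneg hc.le (integral_nonneg fun _ => sq_nonneg _)
  have hsum := add_le_add (hu.2.2 w hw hws) (hv.2.2 w hw hws)
  simp only [rofEnergy] at hsum
  rw [add_add_add_comm, add_add_add_comm (eVariationOn w _), ← ENNReal.ofReal_add (hnn _) (hnn _),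
    ← ENNReal.ofReal_add (hnn _) (hnn _)] at hsum
  have hcancel := (ENNReal.add_le_add_iff_left
    (ENNReal.add_ne_top.2 ⟨hu.eVariationOn_ne_top, hv.eVariationOn_ne_top⟩)).1
    (hsum.trans (by gcongr))
  rw [ENNReal.ofReal_le_ofReal_iff (add_nonneg (hnn _) (hnn _)), ← mul_add, ← mul_add] at hcancel
  exact le_of_mul_le_mul_left hcancel hc

theorem IsMinimizer.integral_norm_sub_sq_le (hlam : 0 < lam)
    (hf : Measurable f) (hfs : SqIntOn f (Ioo a b)) (hg : Measurable g) (hgs : SqIntOn g (Ioo a b))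
    (hu : IsMinimizer lam a b f u) (hv : IsMinimizer lam a b g v) :
    ∫ x in Ioo a b, ‖u x - v x‖ ^ 2 ≤ 4 * ∫ x in Ioo a b, ‖f x - g x‖ ^ 2 := by
  set m := fun x => midpoint ℝ (u x) (v x)
  have hm_meas : Measurable m := by
    simp only [m, midpoint_eq_smul_add]; exact (hu.1.add hv.1).const_smul (⅟2 : ℝ)
  have hm_memLp : MemLp m 2 (volume.restrict (Ioo a b)) := by
    simp only [m, midpoint_eq_smul_add]; exact (hu.memLp.add hv.memLp).const_smul (⅟2 : ℝ)
  have hf2 := hfs.memLp hf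
  have hg2 := hgs.memLp hg
  have hfidelity := hu.integral_add_le_of_eVariationOn hlam hv hm_meas
    (hm_memLp.integrable_norm_pow two_ne_zero)
    ((add_le_add (eVariationOn_midpoint_le u v _) (eVariationOn_midpoint_le u v _)).trans_eq
      (ENNReal.add_halves _))
  have iMF := hm_memLp.integrable_norm_sub_sq hf2
  have iMG := hm_memLp.integrable_norm_sub_sq hg2
  have iUV := hu.memLp.integrable_norm_sub_sq hv.memLp
  have iUF := hu.memLp.integrable_norm_sub_sq hf2
  have iVG := hv.memLp.integrable_norm_sub_sq hg2
  have iFG := hf2.integrable_norm_sub_sq hg2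
  have hpointwise : (∫ x in Ioo a b, ‖m x - f x‖ ^ 2 + ‖m x - g x‖ ^ 2 + ‖u x - v x‖ ^ 2 / 4) ≤
      ∫ x in Ioo a b, ‖u x - f x‖ ^ 2 + ‖v x - g x‖ ^ 2 + ‖f x - g x‖ ^ 2 :=
    integral_mono ((iMF.fun_add iMG).fun_add (iUV.div_const 4)) ((iUF.fun_add iVG).fun_add iFG)
      fun x => norm_midpoint_sub_sq_add_le _ _ _ _
  rw [integral_add (iMF.fun_add iMG) (iUV.div_const 4), integral_add iMF iMG, integral_div,
    integral_add (iUF.fun_add iVG) iFG, integral_add iUF iVG] at hpointwise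
  linarith

end ROF

theorem rof_minimizers_stable_in_L2_general
    {n : ℕ} (a b : ℝ) (lam : ℝ) (hlam : 0 < lam)
    (f : ℝ → EuclideanSpace ℝ (Fin n)) (hf_meas : Measurable f)
    (hf_sq : SqIntOn f (Set.Ioo a b))
    (fseq : ℕ → ℝ → EuclideanSpace ℝ (Fin n))
    (hfseq_meas : ∀ k, Measurable (fseq k))
    (hfseq_sq : ∀ k, SqIntOn (fseq k) (Set.Ioo a b))
    (hconv : Filter.Tendsto (fun k => ∫ x in Set.Ioo a b, ‖fseq k x - f x‖ ^ 2)
      Filter.atTop (nhds 0))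
    (useq : ℕ → ℝ → EuclideanSpace ℝ (Fin n))
    (huseq : ∀ k, IsMinimizer lam a b (fseq k) (useq k))
    (u : ℝ → EuclideanSpace ℝ (Fin n)) (hu : IsMinimizer lam a b f u) :
    Filter.Tendsto (fun k => ∫ x in Set.Ioo a b, ‖useq k x - u x‖ ^ 2)
      Filter.atTop (nhds 0) := by
  have hbound k :=
    (huseq k).integral_norm_sub_sq_le hlam (hfseq_meas k) (hfseq_sq k) hf_meas hf_sq hu
  refine squeeze_zero (fun k => integral_nonneg fun _ => sq_nonneg _) hbound ?_
  simpa using hconv.const_mul 4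

/-- stability of ROF minimizers: if the data `f_k` converge to `f` in
`L²(I,ℝⁿ)`, then the corresponding minimizers `u_k` converge in `L²(I,ℝⁿ)` to the
minimizer `u` for datum `f`. -/
theorem rof_minimizers_stable_in_L2
    {n : ℕ} (hn : 1 ≤ n) (a b : ℝ) (hab : a < b) (lam : ℝ) (hlam : 0 < lam)
    (f : ℝ → EuclideanSpace ℝ (Fin n)) (hf_meas : Measurable f)
    (hf_sq : SqIntOn f (Set.Ioo a b))
    (fseq : ℕ → ℝ → EuclideanSpace ℝ (Fin n))
    (hfseq_meas : ∀ k, Measurable (fseq k))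
    (hfseq_sq : ∀ k, SqIntOn (fseq k) (Set.Ioo a b))
    (hconv : Filter.Tendsto (fun k => ∫ x in Set.Ioo a b, ‖fseq k x - f x‖ ^ 2)
      Filter.atTop (nhds 0))
    (useq : ℕ → ℝ → EuclideanSpace ℝ (Fin n))
    (huseq : ∀ k, IsMinimizer lam a b (fseq k) (useq k))
    (u : ℝ → EuclideanSpace ℝ (Fin n)) (hu : IsMinimizer lam a b f u) :
    Filter.Tendsto (fun k => ∫ x in Set.Ioo a b, ‖useq k x - u x‖ ^ 2)
      Filter.atTop (nhds 0) :=
  rof_minimizers_stable_in_L2_general a b lam hlam f hf_meas hf_sq fseq hfseq_meas hfseq_sq hconv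
    useq huseq u hu
end
end
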